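/- arXiv:1310.7139 — 2 statements merged into one kernel-verified Lean document; each statement's English description precedes it below -/
import Mathlib

section
/- Let X be a Banach space, Y a closed subspace of X, and ||| · ||| an equivalent norm on Y (i.e., there exist constants 0 < c ≤ C with c‖y‖ ≤ |||y||| ≤ C‖y‖ for all y ∈ Y). Then there exists an equivalent norm N on all of X whose restriction to Y equals ||| · |||. -/
/-!
Extend `f` by the inf-convolution `N x = ⨅ y ∈ Y, f y + C ‖x - y‖`. Since `f ≤ C ‖·‖` on `Y`,
the triangle inequality for `f` shows that the infimum at a point of `Y` is attained at that point,
so `N` extends `f`; taking `y = 0` gives `N ≤ C ‖·‖`, and `c ‖y‖ + C ‖x - y‖ ≥ c ‖x‖` gives the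
lower bound.
-/

open Set

namespace Seminorm

variable {𝕜 E : Type*} [NormedField 𝕜] [SeminormedAddCommGroup E] [NormedSpace 𝕜 E]
  {Y : Submodule 𝕜 E} (p : Seminorm 𝕜 Y) {C : ℝ} (hC : 0 ≤ C)

include hC in
theorem bddBelow_range_add_mul_norm_sub (x : E) :
    BddBelow (range fun y : Y => p y + C * ‖x - y‖) :=
  ⟨0, by rintro _ ⟨y, rfl⟩; positivity⟩

noncomputable def extension : Seminorm 𝕜 E :=
  Seminorm.ofSMulLE (fun x => ⨅ y : Y, p y + C * ‖x - y‖)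
    (le_antisymm
      (ciInf_le_of_le (p.bddBelow_range_add_mul_norm_sub hC 0) 0 (by simp))
      (le_ciInf fun _ => by positivity))
    (fun a b => le_ciInf_add_ciInf fun y z =>
      ciInf_le_of_le (p.bddBelow_range_add_mul_norm_sub hC _) (y + z) <| by
        have hnorm : ‖a + b - ↑(y + z)‖ ≤ ‖a - y‖ + ‖b - z‖ := by
          rw [Submodule.coe_add, add_sub_add_comm]
          exact norm_add_le _ _
        nlinarith [map_add_le_add p y z])
    (fun r x => by
      rw [Real.mul_iInf_of_nonneg (norm_nonneg r)]
      refine le_ciInf fun y => ciInf_le_of_le (p.bddBelow_range_add_mul_norm_sub hC _) (r • y) ?_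
      rw [map_smul_eq_mul, Submodule.coe_smul, ← smul_sub, norm_smul]
      exact le_of_eq (by ring))

theorem extension_le (x : E) (y : Y) : p.extension hC x ≤ p y + C * ‖x - y‖ :=
  ciInf_le (p.bddBelow_range_add_mul_norm_sub hC x) y

theorem extension_le_mul_norm (x : E) : p.extension hC x ≤ C * ‖x‖ := by
  simpa using p.extension_le hC x 0

theorem extension_coe (hp : ∀ y, p y ≤ C * ‖y‖) (y : Y) : p.extension hC y = p y := by
  refine le_antisymm (by simpa using p.extension_le hC y y) (le_ciInf fun z => ?_)
  calc p y ≤ p z + p (y - z) := by simpa using map_add_le_add p z (y - z)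
    _ ≤ p z + C * ‖(y : E) - z‖ := by simpa using hp (y - z)

theorem mul_norm_le_extension {c : ℝ} (hc : 0 ≤ c) (hcC : c ≤ C) (hp : ∀ y, c * ‖y‖ ≤ p y)
    (x : E) : c * ‖x‖ ≤ p.extension hC x :=
  le_ciInf fun y => by
    have hlow : c * ‖(y : E)‖ ≤ p y := hp y
    have htri : ‖x‖ ≤ ‖(y : E)‖ + ‖x - y‖ := norm_le_insert' x y
    nlinarith [norm_nonneg (x - y)]

end Seminorm

theorem stmt_0_general {X : Type*} [NormedAddCommGroup X] [NormedSpace ℝ X]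
    (Y : Subspace ℝ X)
    (f : Y → ℝ)
    (hf_add : ∀ a b : Y, f (a + b) ≤ f a + f b)
    (hf_smul : ∀ (r : ℝ) (a : Y), f (r • a) = |r| * f a)
    (c C : ℝ) (hc : 0 < c) (hcC : c ≤ C)
    (hf_low : ∀ y : Y, c * ‖y‖ ≤ f y)
    (hf_up : ∀ y : Y, f y ≤ C * ‖y‖) :
    ∃ (N : X → ℝ) (c' C' : ℝ), 0 < c' ∧ c' ≤ C' ∧
      (∀ a b : X, N (a + b) ≤ N a + N b) ∧
      (∀ (r : ℝ) (x : X), N (r • x) = |r| * N x) ∧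
      (∀ x : X, c' * ‖x‖ ≤ N x) ∧
      (∀ x : X, N x ≤ C' * ‖x‖) ∧
      (∀ y : Y, N (y : X) = f y) := by
  let p : Seminorm ℝ Y := Seminorm.of f hf_add fun r a => by rw [hf_smul, Real.norm_eq_abs]
  have hC : 0 ≤ C := hc.le.trans hcC
  refine ⟨p.extension hC, c, C, hc, hcC, map_add_le_add _, fun r x => ?_,
    p.mul_norm_le_extension hC hc.le hcC hf_low, p.extension_le_mul_norm hC,
    p.extension_coe hC hf_up⟩
  rw [map_smul_eq_mul, Real.norm_eq_abs]

/-- Any equivalent norm on a closed subspace of a Banach space extends to an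
equivalent norm on the whole space. -/
theorem stmt_0 {X : Type*} [NormedAddCommGroup X] [NormedSpace ℝ X] [CompleteSpace X]
    (Y : Subspace ℝ X) (hYclosed : IsClosed (Y : Set X))
    (f : Y → ℝ)
    (hf_add : ∀ a b : Y, f (a + b) ≤ f a + f b)
    (hf_smul : ∀ (r : ℝ) (a : Y), f (r • a) = |r| * f a)
    (c C : ℝ) (hc : 0 < c) (hcC : c ≤ C)
    (hf_low : ∀ y : Y, c * ‖y‖ ≤ f y)
    (hf_up : ∀ y : Y, f y ≤ C * ‖y‖) :
    ∃ (N : X → ℝ) (c' C' : ℝ), 0 < c' ∧ c' ≤ C' ∧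
      (∀ a b : X, N (a + b) ≤ N a + N b) ∧
      (∀ (r : ℝ) (x : X), N (r • x) = |r| * N x) ∧
      (∀ x : X, c' * ‖x‖ ≤ N x) ∧
      (∀ x : X, N x ≤ C' * ‖x‖) ∧
      (∀ y : Y, N (y : X) = f y) :=
  stmt_0_general Y f hf_add hf_smul c C hc hcC hf_low hf_up
end

section
/- Let (B_k)_{k=1}^∞ and (B̃_j)_{j=1}^∞ be two partitions of ℕ into nonempty finite sets, and define m_k = Σ_{i ∈ B_k} 2^i and m̃_j = Σ_{i ∈ B̃_j} 2^i. If the sets of achievable finite sums agree, i.e., { Σ_{k ∈ A} m_k : A ⊆ ℕ finite } = { Σ_{j ∈ A} m̃_j : A ⊆ ℕ finite }, then the two partitions are equal (as families of sets): {B_k : k} = {B̃_j : j}. -/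
/-!
Since binary representations are unique, `∑_{k ∈ A} m_k` is the binary code of `⋃_{k ∈ A} B_k`.
Equal sum sets therefore make every part of either partition a union of parts of the other.
Two such mutually refining partitions agree: given `i ∈ B_k ∩ B̃_j`, the part `B̃_j` is among those
whose union is `B_k`, and vice versa, so `B_k = B̃_j`.
-/

open Finset Function

variable {ι κ α : Type*}

def achievableSums (B : ι → Finset ℕ) : Set ℕ :=
  {s | ∃ A : Finset ι, s = ∑ k ∈ A, ∑ i ∈ B k, 2 ^ i}

lemma sum_sum_two_pow_eq_sum_biUnion {B : ι → Finset ℕ} (hB : Pairwise (Disjoint on B))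
    (A : Finset ι) : ∑ k ∈ A, ∑ i ∈ B k, 2 ^ i = ∑ i ∈ A.biUnion B, 2 ^ i :=
  (sum_biUnion (hB.set_pairwise _)).symm

lemma exists_eq_biUnion_of_achievableSums_subset {B : ι → Finset ℕ} {B' : κ → Finset ℕ}
    (hB' : Pairwise (Disjoint on B')) (hsub : achievableSums B ⊆ achievableSums B') (k : ι) :
    ∃ A : Finset κ, B k = A.biUnion B' := by
  have hk : ∑ i ∈ B k, 2 ^ i ∈ achievableSums B := ⟨{k}, by simp⟩
  obtain ⟨A, hA⟩ := hsub hk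
  rw [sum_sum_two_pow_eq_sum_biUnion hB'] at hA
  exact ⟨A, geomSum_injective le_rfl hA⟩

lemma subset_of_eq_biUnion [DecidableEq α] {B : ι → Finset α} {B' : κ → Finset α}
    (hB' : Pairwise (Disjoint on B')) {k : ι} {j : κ} {i : α}
    (hk : ∃ A : Finset κ, B k = A.biUnion B') (hik : i ∈ B k) (hij : i ∈ B' j) :
    B' j ⊆ B k := by
  obtain ⟨A, hA⟩ := hk
  obtain ⟨j', hj'A, hij'⟩ := mem_biUnion.1 (hA ▸ hik)
  obtain rfl : j' = j := hB'.eq (not_disjoint_iff.2 ⟨i, hij', hij⟩)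
  exact hA ▸ subset_biUnion_of_mem B' hj'A

lemma range_subset_range_of_forall_eq_biUnion [DecidableEq α] {B : ι → Finset α}
    {B' : κ → Finset α}
    (hne : ∀ k, (B k).Nonempty) (hB : Pairwise (Disjoint on B)) (hB' : Pairwise (Disjoint on B'))
    (hrefine : ∀ k, ∃ A : Finset κ, B k = A.biUnion B')
    (hrefine' : ∀ j, ∃ A : Finset ι, B' j = A.biUnion B) :
    Set.range B ⊆ Set.range B' := by
  rintro _ ⟨k, rfl⟩
  obtain ⟨i, hik⟩ := hne k
  obtain ⟨A, hA⟩ := hrefine k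
  obtain ⟨j, -, hij⟩ := mem_biUnion.1 (hA ▸ hik)
  exact ⟨j, (subset_of_eq_biUnion hB' ⟨A, hA⟩ hik hij).antisymm
    (subset_of_eq_biUnion hB (hrefine' j) hij hik)⟩

theorem stmt_10_general (B B' : ℕ → Finset ℕ)
    (hB_ne : ∀ k, (B k).Nonempty) (hB'_ne : ∀ j, (B' j).Nonempty)
    (hB_disj : ∀ k l, k ≠ l → Disjoint (B k) (B l))
    (hB'_disj : ∀ k l, k ≠ l → Disjoint (B' k) (B' l))
    (hsums : {s : ℕ | ∃ A : Finset ℕ, s = ∑ k ∈ A, ∑ i ∈ B k, 2 ^ i} =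
             {s : ℕ | ∃ A : Finset ℕ, s = ∑ j ∈ A, ∑ i ∈ B' j, 2 ^ i}) :
    Set.range B = Set.range B' := by
  have hB : Pairwise (Disjoint on B) := fun k l => hB_disj k l
  have hB' : Pairwise (Disjoint on B') := fun k l => hB'_disj k l
  have hsums : achievableSums B = achievableSums B' := hsums
  have hrefine := exists_eq_biUnion_of_achievableSums_subset hB' hsums.le
  have hrefine' := exists_eq_biUnion_of_achievableSums_subset hB hsums.ge
  exact (range_subset_range_of_forall_eq_biUnion hB_ne hB hB' hrefine hrefine').antisymm
    (range_subset_range_of_forall_eq_biUnion hB'_ne hB' hB hrefine' hrefine)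

/-- Two partitions of `ℕ` into nonempty finite sets with the same sets of
achievable finite sums of `m_k = ∑_{i ∈ B_k} 2^i` coincide as families of sets. -/
theorem stmt_10 (B B' : ℕ → Finset ℕ)
    (hB_ne : ∀ k, (B k).Nonempty) (hB'_ne : ∀ j, (B' j).Nonempty)
    (hB_disj : ∀ k l, k ≠ l → Disjoint (B k) (B l))
    (hB'_disj : ∀ k l, k ≠ l → Disjoint (B' k) (B' l))
    (hB_cover : ∀ i : ℕ, ∃ k, i ∈ B k)
    (hB'_cover : ∀ i : ℕ, ∃ j, i ∈ B' j)
    (hsums : {s : ℕ | ∃ A : Finset ℕ, s = ∑ k ∈ A, ∑ i ∈ B k, 2 ^ i} =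
             {s : ℕ | ∃ A : Finset ℕ, s = ∑ j ∈ A, ∑ i ∈ B' j, 2 ^ i}) :
    Set.range B = Set.range B' :=
  stmt_10_general B B' hB_ne hB'_ne hB_disj hB'_disj hsums
end
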